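/- Let α, β > 0 and (v, θ, ω) ∈ ℝ³ with ω > 0, H₁(v,θ,ω) < 0 and H₂(v,θ,ω) < 0. Then the C2a duration is strictly smaller than the C2b duration: −ω/α + (1/α)·√(2ω² − 4αθ + α²v²/β²) < −2θ/ω + |v|/β. -/

import Mathlib

/-! With `t = -2θ/ω` and `a = |v|/β`, the radicand is `2ω² + 2αωt + α²a²`, and `H₁ < 0` says
exactly `ω < αt`. Squaring, the claim becomes `0 < (αt)² - ω² + 2αa(αt + ω)`, which holds since
`αt > ω > 0` and `a ≥ 0`. -/

noncomputable def H1 (α v θ ω : ℝ) : ℝ := 2 * α * θ + ω * |ω|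

noncomputable def H2 (α β v θ ω : ℝ) : ℝ := ω * |ω| / (2 * α) + θ + ω * |v| / β

lemma sqrt_radicand_lt {α ω a t : ℝ} (hα : 0 < α) (hω : 0 < ω) (ha : 0 ≤ a) (hωt : ω < α * t) :
    Real.sqrt (2 * ω ^ 2 + 2 * α * ω * t + α ^ 2 * a ^ 2) < α * (t + a) + ω := by
  rw [Real.sqrt_lt' (by nlinarith)]
  nlinarith [mul_nonneg (mul_nonneg hα.le ha) (add_pos hω (hω.trans hωt)).le]

lemma neg_div_add_one_div_mul_sqrt_lt {α ω a t : ℝ} (hα : 0 < α) (hω : 0 < ω) (ha : 0 ≤ a)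
    (hωt : ω < α * t) :
    -ω / α + (1 / α) * Real.sqrt (2 * ω ^ 2 + 2 * α * ω * t + α ^ 2 * a ^ 2) < t + a := by
  calc -ω / α + (1 / α) * Real.sqrt (2 * ω ^ 2 + 2 * α * ω * t + α ^ 2 * a ^ 2)
      < -ω / α + (1 / α) * (α * (t + a) + ω) := by
        gcongr
        exact sqrt_radicand_lt hα hω ha hωt
    _ = t + a := by field_simp; ring

theorem stmt4_general (α β v θ ω : ℝ) (hα : 0 < α) (hβ : 0 < β)
    (hω : 0 < ω) (hH1 : H1 α v θ ω < 0) :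
    -ω / α + (1 / α) * Real.sqrt (2 * ω ^ 2 - 4 * α * θ + α ^ 2 * v ^ 2 / β ^ 2)
      < -2 * θ / ω + |v| / β := by
  rw [H1, abs_of_pos hω] at hH1
  have hωt : ω < α * (-2 * θ / ω) := by
    rw [mul_div_assoc', lt_div_iff₀ hω]
    linarith
  have hradicand : 2 * ω ^ 2 - 4 * α * θ + α ^ 2 * v ^ 2 / β ^ 2
      = 2 * ω ^ 2 + 2 * α * ω * (-2 * θ / ω) + α ^ 2 * (|v| / β) ^ 2 := by
    rw [div_pow, sq_abs]
    field_simp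
    ring
  rw [hradicand]
  exact neg_div_add_one_div_mul_sqrt_lt hα hω (by positivity) hωt

theorem stmt4 (α β v θ ω : ℝ) (hα : 0 < α) (hβ : 0 < β)
    (hω : 0 < ω) (hH1 : H1 α v θ ω < 0) (hH2 : H2 α β v θ ω < 0) :
    -ω / α + (1 / α) * Real.sqrt (2 * ω ^ 2 - 4 * α * θ + α ^ 2 * v ^ 2 / β ^ 2)
      < -2 * θ / ω + |v| / β :=
  stmt4_general α β v θ ω hα hβ hω hH1
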